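/- Let a, b, c, d be nonzero real numbers and let n₅(a,b,c,d) be the Lie algebra structure on ℝ⁷ with nonzero brackets [e₁,e₂] = −a e₃, [e₁,e₃] = −b e₆, [e₁,e₄] = −c e₇, [e₂,e₅] = −d e₇. Let φ₅ = e^{134}+e^{457}−e^{246}−e^{125}−e^{356}+e^{167}−e^{237}. Then the Chevalley–Eilenberg differential dφ₅ vanishes if and only if a = d and b = c. -/

import Mathlib

noncomputable section

/-- `ℝ⁷` with its standard basis. -/
abbrev V7 := Fin 7 → ℝ

/-- `e^{i₁…i_k}`, the wedge of dual-basis covectors, in the determinant convention: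
`(e^{i₁}∧…∧e^{i_k})(X₁,…,X_k) = det (Xₚ)_{i_q}`. -/
def wE {k : ℕ} (idx : Fin k → Fin 7) (X : Fin k → V7) : ℝ :=
  Matrix.det (Matrix.of fun p q : Fin k => X p (idx q))

/-- The index in `{0, …, k}` of the `m`-th element (0-based) of `{0, …, k} \ {i, j}`,
assuming `i < j`. -/
def skip2 (i j m : ℕ) : ℕ := if m < i then m else if m < j - 1 then m + 1 else m + 2

/-- The Chevalley–Eilenberg differential of a `k`-form `ψ` with respect to a bracket `br`:
`dψ(X₁,…,X_{k+1}) = Σ_{i<j} (−1)^{i+j} ψ([Xᵢ,Xⱼ], X₁,…,X̂ᵢ,…,X̂ⱼ,…,X_{k+1})`. -/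
def CEd {V : Type*} (br : V → V → V) {k : ℕ} (ψ : (Fin k → V) → ℝ)
    (X : Fin (k + 1) → V) : ℝ :=
  ∑ i : Fin (k + 1), ∑ j : Fin (k + 1),
    if (i : ℕ) < (j : ℕ) then
      (-1 : ℝ) ^ ((i : ℕ) + (j : ℕ)) *
        ψ (fun l => if (l : ℕ) = 0 then br (X i) (X j)
          else X ⟨min (skip2 (i : ℕ) (j : ℕ) ((l : ℕ) - 1)) k,
            Nat.lt_succ_of_le (Nat.min_le_right _ _)⟩)
    else 0

/-- The algebraic Lie derivative of a `k`-form with respect to an endomorphism `D`: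
`(L_D ψ)(X₁,…,X_k) = ψ(DX₁,X₂,…,X_k) + … + ψ(X₁,…,X_{k−1},DX_k)`. -/
def LD {V : Type*} (D : V → V) {k : ℕ} (ψ : (Fin k → V) → ℝ) (X : Fin k → V) : ℝ :=
  ∑ i : Fin k, ψ (Function.update X i (D (X i)))

/-- The Lie bracket of `n₅(a,b,c,d)`: `[e₁,e₂] = −a e₃`, `[e₁,e₃] = −b e₆`,
`[e₁,e₄] = −c e₇`, `[e₂,e₅] = −d e₇`. -/
def br5 (a b c d : ℝ) (X Y : V7) : V7 :=
  ![0, 0, -a * (X 0 * Y 1 - X 1 * Y 0), 0, 0, -b * (X 0 * Y 2 - X 2 * Y 0),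
    -c * (X 0 * Y 3 - X 3 * Y 0) - d * (X 1 * Y 4 - X 4 * Y 1)]

/-- `φ₅ = e^{134}+e^{457}−e^{246}−e^{125}−e^{356}+e^{167}−e^{237}`. -/
def phi5 : (Fin 3 → V7) → ℝ := fun X =>
  wE ![0, 2, 3] X + wE ![3, 4, 6] X - wE ![1, 3, 5] X - wE ![0, 1, 4] X
    - wE ![2, 4, 5] X + wE ![0, 5, 6] X - wE ![1, 2, 6] X

/-!
A direct computation gives `dφ₅ = (b - c) e^{1234} + (d - a) e^{1256}`. Evaluating on
`(e₁, e₂, e₃, e₄)` and on `(e₁, e₂, e₅, e₆)` isolates the two coefficients.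
-/

lemma CEd_apply_four {V : Type*} (br : V → V → V) (ψ : (Fin 3 → V) → ℝ) (X : Fin 4 → V) :
    CEd br ψ X = -ψ ![br (X 0) (X 1), X 2, X 3] + ψ ![br (X 0) (X 2), X 1, X 3]
      - ψ ![br (X 0) (X 3), X 1, X 2] - ψ ![br (X 1) (X 2), X 0, X 3]
      + ψ ![br (X 1) (X 3), X 0, X 2] - ψ ![br (X 2) (X 3), X 0, X 1] := by
  have args (u : V) (i j : ℕ) :
      (fun l : Fin 3 => if (l : ℕ) = 0 then u
        else X ⟨min (skip2 i j ((l : ℕ) - 1)) 3, Nat.lt_succ_of_le (Nat.min_le_right _ _)⟩)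
      = ![u, X ⟨min (skip2 i j 0) 3, Nat.lt_succ_of_le (Nat.min_le_right _ _)⟩,
           X ⟨min (skip2 i j 1) 3, Nat.lt_succ_of_le (Nat.min_le_right _ _)⟩] := by
    funext l; fin_cases l <;> rfl
  simp only [CEd, Fin.sum_univ_succ, Fin.sum_univ_zero, args]
  norm_num [skip2]
  simp only [Fin.reduceFinMk, Fin.reduceSucc]
  ring

lemma wE_three_apply (i j k : Fin 7) (x y z : V7) : wE ![i, j, k] ![x, y, z] =
    x i * (y j * z k - y k * z j) - x j * (y i * z k - y k * z i)
      + x k * (y i * z j - y j * z i) := by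
  simp only [wE, Matrix.det_fin_three, Matrix.of_apply, Matrix.cons_val]
  ring

lemma wE_four_apply (i j k l : Fin 7) (X : Fin 4 → V7) : wE ![i, j, k, l] X =
    X 0 i * wE ![j, k, l] ![X 1, X 2, X 3] - X 0 j * wE ![i, k, l] ![X 1, X 2, X 3]
      + X 0 k * wE ![i, j, l] ![X 1, X 2, X 3] - X 0 l * wE ![i, j, k] ![X 1, X 2, X 3] := by
  have h₁ : (Fin.succAbove 1 2 : Fin 4) = 3 := rfl
  have h₂ : (Fin.succAbove 2 2 : Fin 4) = 3 := rfl
  have h₃ : (Fin.succAbove 3 2 : Fin 4) = 2 := rfl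
  simp [wE, Matrix.det_succ_row_zero, Fin.sum_univ_succ, h₁, h₂, h₃]
  ring

theorem CEd_br5_phi5 (a b c d : ℝ) : CEd (br5 a b c d) phi5 =
    fun X => (b - c) * wE ![0, 1, 2, 3] X + (d - a) * wE ![0, 1, 4, 5] X := by
  funext X
  simp only [CEd_apply_four, phi5, wE_four_apply, wE_three_apply, br5, Matrix.cons_val]
  ring

lemma wE_single_of_injective {k : ℕ} {idx : Fin k → Fin 7} (h : Function.Injective idx) :
    wE idx (fun p => Pi.single (idx p) 1) = 1 := by
  rw [wE, ← Matrix.det_one (n := Fin k) (R := ℝ)]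
  congr
  ext p q
  simp [Pi.single_apply, Matrix.one_apply, h.eq_iff, eq_comm]

lemma wE_single_eq_zero {k : ℕ} {idx jdx : Fin k → Fin 7} (q : Fin k)
    (h : ∀ p, jdx p ≠ idx q) : wE idx (fun p => Pi.single (jdx p) 1) = 0 :=
  Matrix.det_eq_zero_of_column_eq_zero q fun p => by
    simpa [Pi.single_apply] using fun hq => h p hq.symm

theorem dphi5_eq_zero_iff_general (a b c d : ℝ) :
    CEd (br5 a b c d) phi5 = (fun _ => (0 : ℝ)) ↔ a = d ∧ b = c := by
  rw [CEd_br5_phi5]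
  constructor
  · intro h
    have h₁ := congrFun h fun p => Pi.single (![0, 1, 2, 3] p) 1
    have h₂ := congrFun h fun p => Pi.single (![0, 1, 4, 5] p) 1
    rw [wE_single_of_injective (by decide),
      wE_single_eq_zero (jdx := ![0, 1, 2, 3]) 2 (by decide)] at h₁
    rw [wE_single_of_injective (by decide),
      wE_single_eq_zero (jdx := ![0, 1, 4, 5]) 2 (by decide)] at h₂
    constructor <;> linarith
  · rintro ⟨rfl, rfl⟩
    funext X
    ring

/-- On `n₅(a,b,c,d)` one has `dφ₅ = 0` if and only if `a = d` and `b = c`. -/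
theorem dphi5_eq_zero_iff (a b c d : ℝ) (ha : a ≠ 0) (hb : b ≠ 0) (hc : c ≠ 0)
    (hd : d ≠ 0) :
    CEd (br5 a b c d) phi5 = (fun _ => (0 : ℝ)) ↔ a = d ∧ b = c :=
  dphi5_eq_zero_iff_general a b c d
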